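/- With the setup of the previous lemma, the Lagrangian dual of the program min F₁ (dualizing the constraints z^k η = y^k with multipliers λ^k) has dual objective F₁*(λ) = min over k of ( ηᵀλ^k − (f^k)*(λ^k, 0) ), where (f^k)* is the convex conjugate of f^k. -/

import Mathlib

open scoped BigOperators

/-- Dual pairing on `ℝ × (Fin m → ℝ)`. -/
noncomputable def pairR {m : ℕ} (p q : ℝ × (Fin m → ℝ)) : ℝ :=
  p.1 * q.1 + ∑ i, p.2 i * q.2 i

/-- Fenchel convex conjugate of a function on `ℝ × (Fin m → ℝ)`. -/
noncomputable def econj2 {m : ℕ} (f : ℝ × (Fin m → ℝ) → EReal)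
    (ν : ℝ × (Fin m → ℝ)) : EReal :=
  ⨆ x : ℝ × (Fin m → ℝ), ((pairR ν x : ℝ) : EReal) - f x

/-- The l.s.c. perspective of `f`, defined via the biconjugate. -/
noncomputable def epersp2 {m : ℕ} (f : ℝ × (Fin m → ℝ) → EReal) (z : ℝ)
    (w : ℝ × (Fin m → ℝ)) : EReal :=
  ⨆ p : {p : ℝ × (ℝ × (Fin m → ℝ)) // ((p.1 : EReal) + econj2 f p.2 ≤ 0)},
    ((z * p.1.1 + pairR w p.1.2 : ℝ) : EReal)

/-- Convexity for extended-real-valued functions on `ℝ × (Fin m → ℝ)`. -/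
def EConvex2 {m : ℕ} (f : ℝ × (Fin m → ℝ) → EReal) : Prop :=
  ∀ x y : ℝ × (Fin m → ℝ), ∀ a b : ℝ, 0 ≤ a → 0 ≤ b → a + b = 1 →
    f (a • x + b • y) ≤ (a : EReal) * f x + (b : EReal) * f y

/-- Properness: never `⊥` and not identically `⊤`. -/
def EProper2 {m : ℕ} (f : ℝ × (Fin m → ℝ) → EReal) : Prop :=
  (∀ x, f x ≠ ⊥) ∧ ∃ x, f x ≠ ⊤

/-!
Testing the perspective of `f^k` against the point `(-(f^k)*(λ^k, 0), (λ^k, 0))` of its defining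
set shows that the `k`-th summand of the Lagrangian is at least `z^k (η λ^k - (f^k)*(λ^k, 0))`;
a convex combination dominates the smallest of these numbers. (Properness rules out
`(f^k)* = -∞`; if some `(f^k)*(λ^k, 0) = +∞` the dual objective is `⊥` anyway.) Conversely,
putting all the weight on one index `k` with `(y^k, w^k) = x` makes the Lagrangian at most
`f^k x + λ^k (η - x₁)` (Fenchel–Young for the perspective at `z = 1`); the infimum over `x` is
`η λ^k - (f^k)*(λ^k, 0)`.
-/

open Finset

lemma EReal.coe_finset_sum {ι : Type*} (s : Finset ι) (g : ι → ℝ) :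
    ((∑ i ∈ s, g i : ℝ) : EReal) = ∑ i ∈ s, (g i : EReal) :=
  map_sum (⟨⟨Real.toEReal, EReal.coe_zero⟩, EReal.coe_add⟩ : ℝ →+ EReal) g s

lemma EReal.le_coe_sub_comm {a b : EReal} {c : ℝ} : a ≤ c - b ↔ b ≤ c - a := by
  rw [EReal.le_sub_iff_add_le (.inr (EReal.coe_ne_bot c)) (.inr (EReal.coe_ne_top c)),
    EReal.le_sub_iff_add_le (.inr (EReal.coe_ne_bot c)) (.inr (EReal.coe_ne_top c)), add_comm]

lemma EReal.coe_sub_coe_sub_eq_add (a b : ℝ) (v : EReal) :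
    (a : EReal) - ((b : EReal) - v) = v + ((a - b : ℝ) : EReal) := by
  induction v with
  | bot => simp
  | top => rw [EReal.sub_top, EReal.coe_sub_bot, EReal.top_add_coe]
  | coe v => norm_cast; ring

lemma exists_le_sum_mul_of_mem_stdSimplex {ι : Type*} [Fintype ι] {z : ι → ℝ}
    (hz : z ∈ stdSimplex ℝ ι) (a : ι → ℝ) : ∃ i, a i ≤ ∑ j, z j * a j := by
  have : Nonempty ι := by
    by_contra hι
    simpa [not_nonempty_iff.mp hι] using hz.2
  obtain ⟨i, hi⟩ := Finite.exists_min a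
  refine ⟨i, ?_⟩
  calc a i = ∑ j, z j * a i := by rw [← sum_mul, hz.2, one_mul]
    _ ≤ ∑ j, z j * a j := sum_le_sum fun j _ => mul_le_mul_of_nonneg_left (hi j) (hz.1 j)

section Conjugate

variable {m : ℕ}

lemma pairR_comm (p q : ℝ × (Fin m → ℝ)) : pairR p q = pairR q p := by
  simp only [pairR, mul_comm]

lemma coe_pairR_sub_le_econj2 (f : ℝ × (Fin m → ℝ) → EReal) (ν x : ℝ × (Fin m → ℝ)) :
    (pairR ν x : EReal) - f x ≤ econj2 f ν :=
  le_iSup (fun x => (pairR ν x : EReal) - f x) x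

lemma econj2_ne_bot {f : ℝ × (Fin m → ℝ) → EReal} (hf : ∃ x, f x ≠ ⊤) (ν : ℝ × (Fin m → ℝ)) :
    econj2 f ν ≠ ⊥ := by
  obtain ⟨x, hx⟩ := hf
  refine ne_bot_of_le_ne_bot ?_ (coe_pairR_sub_le_econj2 f ν x)
  rw [sub_eq_add_neg]
  exact EReal.add_ne_bot_iff.mpr ⟨EReal.coe_ne_bot _, EReal.neg_eq_bot_iff.not.mpr hx⟩

lemma le_coe_sub_econj2 {f : ℝ × (Fin m → ℝ) → EReal} {ν : ℝ × (Fin m → ℝ)} {a : EReal} {c : ℝ}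
    (h : ∀ x, a ≤ c - ((pairR ν x : EReal) - f x)) : a ≤ c - econj2 f ν :=
  EReal.le_coe_sub_comm.mpr (iSup_le fun x => EReal.le_coe_sub_comm.mp (h x))

lemma coe_mul_add_pairR_le_epersp2 {f : ℝ × (Fin m → ℝ) → EReal} {μ : ℝ} {ν : ℝ × (Fin m → ℝ)}
    (h : (μ : EReal) + econj2 f ν ≤ 0) (z : ℝ) (w : ℝ × (Fin m → ℝ)) :
    ((z * μ + pairR w ν : ℝ) : EReal) ≤ epersp2 f z w :=
  le_iSup (fun p : {p : ℝ × (ℝ × (Fin m → ℝ)) // (p.1 : EReal) + econj2 f p.2 ≤ 0} =>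
    ((z * p.1.1 + pairR w p.1.2 : ℝ) : EReal)) ⟨(μ, ν), h⟩

lemma epersp2_zero_zero_nonpos (f : ℝ × (Fin m → ℝ) → EReal) : epersp2 f 0 (0, 0) ≤ 0 :=
  iSup_le fun _ => by simp [pairR]

lemma epersp2_one_le (f : ℝ × (Fin m → ℝ) → EReal) (x : ℝ × (Fin m → ℝ)) :
    epersp2 f 1 x ≤ f x := by
  refine iSup_le fun ⟨⟨μ, ν⟩, hμν⟩ => ?_
  have hconj : econj2 f ν ≤ ((-μ : ℝ) : EReal) := by
    rw [← zero_sub, EReal.coe_sub, EReal.coe_zero, EReal.le_sub_iff_add_le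
      (.inl (EReal.coe_ne_bot μ)) (.inl (EReal.coe_ne_top μ)), add_comm]
    exact hμν
  have young : (pairR ν x : EReal) ≤ ((-μ : ℝ) : EReal) + f x :=
    (EReal.sub_le_iff_le_add (.inr (EReal.coe_ne_top _)) (.inr (EReal.coe_ne_bot _))).mp
      ((coe_pairR_sub_le_econj2 f ν x).trans hconj)
  rw [one_mul, add_comm, pairR_comm, EReal.coe_add, ← EReal.le_sub_iff_add_le
    (.inl (EReal.coe_ne_bot μ)) (.inl (EReal.coe_ne_top μ)), sub_eq_add_neg, add_comm,
    ← EReal.coe_neg]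
  exact young

end Conjugate

section Lagrangian

variable {m K : ℕ}

lemma coe_mul_sub_econj2_le {g : ℝ × (Fin m → ℝ) → EReal} {l r : ℝ}
    (hr : econj2 g (l, 0) = r) (η z y : ℝ) (w : Fin m → ℝ) :
    ((z * (η * l - r) : ℝ) : EReal) ≤ epersp2 g z (y, w) + ((l * (z * η - y) : ℝ) : EReal) := by
  have hmem : ((-r : ℝ) : EReal) + econj2 g (l, 0) ≤ 0 := by
    rw [hr, ← EReal.coe_add, neg_add_cancel, EReal.coe_zero]
  calc ((z * (η * l - r) : ℝ) : EReal)
      = ((z * -r + pairR (y, w) (l, 0) : ℝ) : EReal) + ((l * (z * η - y) : ℝ) : EReal) := by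
        rw [← EReal.coe_add]
        simp only [pairR, Pi.zero_apply, mul_zero, sum_const_zero, add_zero]
        ring_nf
    _ ≤ epersp2 g z (y, w) + ((l * (z * η - y) : ℝ) : EReal) :=
        add_le_add_left (coe_mul_add_pairR_le_epersp2 hmem z (y, w)) _

variable (f : Fin K → ℝ × (Fin m → ℝ) → EReal) (η : ℝ) (lam : Fin K → ℝ)

noncomputable def lagrangianF1 (z y : Fin K → ℝ) (w : Fin K → Fin m → ℝ) : EReal :=
  ∑ k, (epersp2 (f k) (z k) (y k, w k) + ((lam k * (z k * η - y k) : ℝ) : EReal))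

lemma iInf_coe_sub_econj2_le_lagrangianF1 (hf : ∀ k, ∃ x, f k x ≠ ⊤) {z : Fin K → ℝ}
    (hz : z ∈ stdSimplex ℝ (Fin K)) (y : Fin K → ℝ) (w : Fin K → Fin m → ℝ) :
    ⨅ k, (((η * lam k : ℝ) : EReal) - econj2 (f k) (lam k, 0)) ≤ lagrangianF1 f η lam z y w := by
  by_cases hfin : ∀ k, econj2 (f k) (lam k, 0) ≠ ⊤
  · set r : Fin K → ℝ := fun k => (econj2 (f k) (lam k, 0)).toReal
    have hr : ∀ k, econj2 (f k) (lam k, 0) = r k := fun k =>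
      (EReal.coe_toReal (hfin k) (econj2_ne_bot (hf k) _)).symm
    obtain ⟨k, hk⟩ := exists_le_sum_mul_of_mem_stdSimplex hz fun k => η * lam k - r k
    calc ⨅ k, (((η * lam k : ℝ) : EReal) - econj2 (f k) (lam k, 0))
        ≤ ((η * lam k : ℝ) : EReal) - econj2 (f k) (lam k, 0) := iInf_le _ k
      _ = ((η * lam k - r k : ℝ) : EReal) := by rw [hr k, EReal.coe_sub]
      _ ≤ ((∑ j, z j * (η * lam j - r j) : ℝ) : EReal) := EReal.coe_le_coe_iff.mpr hk
      _ = ∑ j, ((z j * (η * lam j - r j) : ℝ) : EReal) := EReal.coe_finset_sum _ _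
      _ ≤ lagrangianF1 f η lam z y w :=
        sum_le_sum fun j _ => coe_mul_sub_econj2_le (hr j) η (z j) (y j) (w j)
  · push Not at hfin
    obtain ⟨k, hk⟩ := hfin
    exact (iInf_le _ k).trans (by simp [hk])

lemma lagrangianF1_single_le (k₀ : Fin K) (x : ℝ × (Fin m → ℝ)) :
    lagrangianF1 f η lam (Pi.single k₀ 1) (Pi.single k₀ x.1) (Pi.single k₀ x.2)
      ≤ ((η * lam k₀ : ℝ) : EReal) - ((pairR (lam k₀, 0) x : EReal) - f k₀ x) := by
  have hpair : pairR (lam k₀, 0) x = lam k₀ * x.1 := by simp [pairR]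
  have hk₀ : epersp2 (f k₀) 1 x + ((lam k₀ * (1 * η - x.1) : ℝ) : EReal)
      ≤ ((η * lam k₀ : ℝ) : EReal) - ((pairR (lam k₀, 0) x : EReal) - f k₀ x) := by
    rw [hpair, EReal.coe_sub_coe_sub_eq_add]
    convert add_le_add_left (epersp2_one_le (f k₀) x) _ using 3
    ring
  rw [lagrangianF1, ← add_sum_erase _ _ (mem_univ k₀)]
  simp only [Pi.single_eq_same, Prod.mk.eta]
  refine (add_le_add hk₀ (sum_nonpos fun k hk => ?_)).trans_eq (add_zero _)
  simp only [Pi.single_eq_of_ne (ne_of_mem_erase hk), zero_mul, sub_zero, mul_zero,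
    EReal.coe_zero, add_zero]
  exact epersp2_zero_zero_nonpos (f k)

end Lagrangian

theorem lagrangian_dual_F1_general {m K : ℕ} (f : Fin K → ℝ × (Fin m → ℝ) → EReal)
    (hproper : ∀ k, EProper2 (f k))
    (η : ℝ) (lam : Fin K → ℝ) :
    (⨅ p : {p : (Fin K → ℝ) × (Fin K → ℝ) × (Fin K → Fin m → ℝ) //
        p.1 ∈ stdSimplex ℝ (Fin K)},
      ∑ k, (epersp2 (f k) (p.1.1 k) (p.1.2.1 k, p.1.2.2 k)
        + ((lam k * (p.1.1 k * η - p.1.2.1 k) : ℝ) : EReal)))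
      = ⨅ k, (((η * lam k : ℝ) : EReal) - econj2 (f k) (lam k, 0)) := by
  refine le_antisymm (le_iInf fun k₀ => le_coe_sub_econj2 fun x => ?_) (le_iInf fun p =>
    iInf_coe_sub_econj2_le_lagrangianF1 f η lam (fun k => (hproper k).2) p.2 _ _)
  exact iInf_le_of_le ⟨(Pi.single k₀ 1, Pi.single k₀ x.1, Pi.single k₀ x.2),
    single_mem_stdSimplex ℝ k₀⟩ (lagrangianF1_single_le f η lam k₀ x)

/-- the Lagrangian dual objective of `min F₁` (dualizing the
constraints `z^k η = y^k` with multipliers `λ^k`) equals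
`min_k ( η λ^k − (f^k)*(λ^k, 0) )`. -/
theorem lagrangian_dual_F1 {m K : ℕ} (f : Fin K → ℝ × (Fin m → ℝ) → EReal)
    (hproper : ∀ k, EProper2 (f k)) (hconv : ∀ k, EConvex2 (f k))
    (hlsc : ∀ k, LowerSemicontinuous (f k))
    (hbdd : ∀ k, Bornology.IsBounded {x | f k x ≠ ⊤})
    (η : ℝ) (lam : Fin K → ℝ) :
    (⨅ p : {p : (Fin K → ℝ) × (Fin K → ℝ) × (Fin K → Fin m → ℝ) //
        p.1 ∈ stdSimplex ℝ (Fin K)},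
      ∑ k, (epersp2 (f k) (p.1.1 k) (p.1.2.1 k, p.1.2.2 k)
        + ((lam k * (p.1.1 k * η - p.1.2.1 k) : ℝ) : EReal)))
      = ⨅ k, (((η * lam k : ℝ) : EReal) - econj2 (f k) (lam k, 0)) :=
  lagrangian_dual_F1_general f hproper η lam
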